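/- arXiv:1409.5514 — 4 statements merged into one kernel-verified Lean document; each statement's English description precedes it below -/
import Mathlib

section
/- Comparison principle for the cell problem: Let H : ℝ^N × ℝ^N → ℝ be continuous and ℤ^N-periodic in its first variable, let P ∈ ℝ^N and a, b ∈ ℝ. If there exist a Lipschitz continuous ℤ^N-periodic viscosity subsolution u of the cell problem H(x, Du + P) = a on T^N and a Lipschitz continuous ℤ^N-periodic viscosity supersolution v of the cell problem H(x, Dv + P) = b on T^N, then a ≥ b. -/
open Set Filter MeasureTheory

noncomputable section

abbrev Euc (N : ℕ) := EuclideanSpace ℝ (Fin N)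

def intVec {N : ℕ} (z : Fin N → ℤ) : Euc N :=
  (EuclideanSpace.equiv (Fin N) ℝ).symm (fun i => (z i : ℝ))

def IsZPeriodic {N : ℕ} (u : Euc N → ℝ) : Prop :=
  ∀ (x : Euc N) (z : Fin N → ℤ), u (x + intVec z) = u x

def IsZPeriodicH {N : ℕ} (H : Euc N → Euc N → ℝ) : Prop :=
  ∀ (x p : Euc N) (z : Fin N → ℤ), H (x + intVec z) p = H x p

def superDiff {N : ℕ} (u : Euc N → ℝ) (x : Euc N) : Set (Euc N) :=
  { q | ∃ φ : Euc N → ℝ, ContDiff ℝ 1 φ ∧ IsZPeriodic φ ∧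
        (∀ y, u y - φ y ≤ u x - φ x) ∧ q = gradient φ x }

def subDiff {N : ℕ} (u : Euc N → ℝ) (x : Euc N) : Set (Euc N) :=
  { q | ∃ φ : Euc N → ℝ, ContDiff ℝ 1 φ ∧ IsZPeriodic φ ∧
        (∀ y, u x - φ x ≤ u y - φ y) ∧ q = gradient φ x }

def IsCellSubsolution {N : ℕ} (H : Euc N → Euc N → ℝ) (P : Euc N) (a : ℝ) (u : Euc N → ℝ) : Prop :=
  ∀ x, ∀ q ∈ superDiff u x, H x (q + P) ≤ a

def IsCellSupersolution {N : ℕ} (H : Euc N → Euc N → ℝ) (P : Euc N) (a : ℝ) (u : Euc N → ℝ) : Prop :=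
  ∀ x, ∀ q ∈ subDiff u x, a ≤ H x (q + P)

def IsCellSolution {N : ℕ} (H : Euc N → Euc N → ℝ) (P : Euc N) (u : Euc N → ℝ) (a : ℝ) : Prop :=
  (∃ K : NNReal, LipschitzWith K u) ∧ IsZPeriodic u ∧
    IsCellSubsolution H P a u ∧ IsCellSupersolution H P a u

def IsCoerciveH {N : ℕ} (H : Euc N → Euc N → ℝ) : Prop :=
  ∀ C : ℝ, ∃ r : ℝ, ∀ x p : Euc N, r ≤ ‖p‖ → C ≤ H x p

/-!
Doubling of variables with a periodic penalty. For `c > 0` the function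
`u x - v y - c * G (x - y)`, where `G z = ∑ i, (1 - cos (2π zᵢ))`, is `ℤ^N`-periodic in `x` and in
`y` separately, so it attains its maximum, at a point where `y` and `x - y` lie in the unit cube
centred at `0`. There `G z ≥ 8‖z‖²`, so the Lipschitz constant `L` of `u` gives `‖x - y‖ ≤ L / (8c)`,
and `q = c ∇G (x - y)` lies in `D⁺u(x) ∩ D⁻v(y)` with `‖q‖ ≤ L`. Hence
`b ≤ H(y, q + P)` and `H(x, q + P) ≤ a`, and uniform continuity of `H` near a compact set
closes the gap as `c → ∞`.
-/

open Real Topology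

theorem IsCompact.exists_forall_dist_lt {α β : Type*} [PseudoMetricSpace α] [PseudoMetricSpace β]
    {s : Set α} (hs : IsCompact s) {f : α → β} (hf : Continuous f) {ε : ℝ} (hε : 0 < ε) :
    ∃ δ > 0, ∀ x ∈ s, ∀ y, dist x y < δ → dist (f x) (f y) < ε := by
  have hU := hs.uniformContinuousAt_of_continuousAt f (fun a _ => hf.continuousAt)
    (Metric.dist_mem_uniformity hε)
  obtain ⟨δ, hδ, hδU⟩ := Metric.mem_uniformity_dist.1 hU
  exact ⟨δ, hδ, fun x hx y hxy => hδU hxy hx⟩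

theorem IsCompact.exists_forall_le_of_forall_exists_mem {X : Type*} [TopologicalSpace X]
    {s : Set X} (hs : IsCompact s) (hne : s.Nonempty) {f : X → ℝ} (hf : ContinuousOn f s)
    (hrep : ∀ x, ∃ y ∈ s, f x ≤ f y) : ∃ x ∈ s, ∀ y, f y ≤ f x := by
  obtain ⟨x, hx, hmax⟩ := hs.exists_isMaxOn hne hf
  refine ⟨x, hx, fun y => ?_⟩
  obtain ⟨z, hz, hyz⟩ := hrep y
  exact hyz.trans (hmax hz)

section Gradient

variable {E : Type*} [NormedAddCommGroup E] [InnerProductSpace ℝ E] [CompleteSpace E]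

theorem norm_le_of_hasGradientAt_of_sub_le {φ : E → ℝ} {q x : E} {C : ℝ} (hC : 0 ≤ C)
    (hφ : HasGradientAt φ q x) (h : ∀ y, φ x - φ y ≤ C * ‖y - x‖) : ‖q‖ ≤ C := by
  -- The slope of `φ` at `x` in the direction `-q` is `-‖q‖²`, and `h` bounds it below by `-C‖q‖`.
  have hline : HasDerivAt (fun t : ℝ => φ (x + t • -q)) (inner ℝ q (-q)) 0 := by
    have hpath : HasDerivAt (fun t : ℝ => x + t • -q) (-q) 0 := by
      simpa using ((hasDerivAt_id (0 : ℝ)).smul_const (-q)).const_add x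
    have hφ' : HasFDerivAt φ (InnerProductSpace.toDual ℝ E q) (x + (0 : ℝ) • -q) := by
      simpa [hasGradientAt_iff_hasFDerivAt] using hφ
    simpa [Function.comp_def] using hφ'.comp_hasDerivAt (0 : ℝ) hpath
  have hslope : ∀ᶠ t in 𝓝[>] (0 : ℝ),
      -(C * ‖q‖) ≤ t⁻¹ • (φ (x + (0 + t) • -q) - φ (x + (0 : ℝ) • -q)) := by
    filter_upwards [self_mem_nhdsWithin] with t (ht : 0 < t)
    have hxt := h (x + t • -q)
    rw [add_sub_cancel_left, norm_smul, norm_neg, Real.norm_of_nonneg ht.le] at hxt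
    rw [zero_add, zero_smul, add_zero, smul_eq_mul, le_inv_mul_iff₀ ht]
    linarith
  have hle : -(C * ‖q‖) ≤ inner ℝ q (-q) := ge_of_tendsto hline.tendsto_slope_zero_right hslope
  rw [inner_neg_right, real_inner_self_eq_norm_sq] at hle
  nlinarith [norm_nonneg q]

theorem gradient_const_mul_comp_sub_const {G : E → ℝ} {x y : E}
    (hG : DifferentiableAt ℝ G (x - y)) (c : ℝ) :
    gradient (fun x' => c * G (x' - y)) x = c • gradient G (x - y) := by
  refine HasGradientAt.gradient ?_
  rw [hasGradientAt_iff_hasFDerivAt]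
  refine ((hG.hasFDerivAt.comp x ((hasFDerivAt_id x).sub_const y)).const_mul c).congr_fderiv ?_
  ext v
  simp

theorem gradient_neg_const_mul_comp_const_sub {G : E → ℝ} {x y : E}
    (hG : DifferentiableAt ℝ G (x - y)) (c : ℝ) :
    gradient (fun y' => -(c * G (x - y'))) y = c • gradient G (x - y) := by
  refine HasGradientAt.gradient ?_
  rw [hasGradientAt_iff_hasFDerivAt]
  refine ((hG.hasFDerivAt.comp y ((hasFDerivAt_id y).const_sub x)).const_mul c).neg.congr_fderiv ?_
  ext v
  simp

end Gradient

theorem IsZPeriodic.sub_intVec {N : ℕ} {u : Euc N → ℝ} (hu : IsZPeriodic u) (x : Euc N)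
    (m : Fin N → ℤ) : u (x - intVec m) = u x := by
  rw [← hu (x - intVec m) m, sub_add_cancel]

def centeredUnitCube (N : ℕ) : Set (Euc N) := {x | ∀ i, |x i| ≤ 1 / 2}

theorem isCompact_centeredUnitCube (N : ℕ) : IsCompact (centeredUnitCube N) := by
  have hcube : centeredUnitCube N =
      EuclideanSpace.equiv (Fin N) ℝ ⁻¹' Set.univ.pi fun _ => Set.Icc (-(1 / 2)) (1 / 2) := by
    ext x
    simp only [centeredUnitCube, Set.mem_preimage, Set.mem_univ_pi, Set.mem_Icc, abs_le]
    rfl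
  rw [hcube]
  exact (EuclideanSpace.equiv (Fin N) ℝ).toHomeomorph.isCompact_preimage.2
    (isCompact_univ_pi fun _ => isCompact_Icc)

theorem exists_add_intVec_mem_centeredUnitCube {N : ℕ} (x : Euc N) :
    ∃ m, x + intVec m ∈ centeredUnitCube N :=
  ⟨fun i => -round (x i), fun i => by simpa [intVec, ← sub_eq_add_neg] using abs_sub_round (x i)⟩

def torusPenalty {N : ℕ} (z : Euc N) : ℝ := ∑ i, (1 - cos (2 * π * z i))

theorem torusPenalty_zero {N : ℕ} : torusPenalty (0 : Euc N) = 0 := by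
  simp [torusPenalty]

theorem isZPeriodic_torusPenalty {N : ℕ} : IsZPeriodic (torusPenalty (N := N)) := by
  intro x m
  refine Finset.sum_congr rfl fun i _ => ?_
  rw [PiLp.add_apply, mul_add, show intVec m i = (m i : ℝ) from rfl, mul_comm _ (m i : ℝ),
    cos_add_int_mul_two_pi]

theorem contDiff_torusPenalty {N : ℕ} {n : WithTop ℕ∞} : ContDiff ℝ n (torusPenalty (N := N)) :=
  ContDiff.sum fun i _ => contDiff_const.sub
    (contDiff_cos.comp (contDiff_const.mul (EuclideanSpace.proj (𝕜 := ℝ) i).contDiff))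

theorem eight_mul_norm_sq_le_torusPenalty {N : ℕ} {z : Euc N} (hz : z ∈ centeredUnitCube N) :
    8 * ‖z‖ ^ 2 ≤ torusPenalty z := by
  rw [EuclideanSpace.norm_sq_eq, Finset.mul_sum]
  refine Finset.sum_le_sum fun i _ => ?_
  have hπ : |2 * π * z i| ≤ π := by
    rw [abs_mul, abs_of_pos (by positivity : (0 : ℝ) < 2 * π)]
    nlinarith [hz i, pi_pos]
  have := cos_le_one_sub_mul_cos_sq hπ
  rw [Real.norm_eq_abs, sq_abs]
  field_simp at this
  nlinarith [pi_pos]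

section TestFunctions

variable {N : ℕ} {G : Euc N → ℝ}

theorem smul_gradient_mem_superDiff (hG : ContDiff ℝ 1 G) (hGp : IsZPeriodic G) {u : Euc N → ℝ}
    {x y : Euc N} {c : ℝ} (hmax : ∀ x', u x' - c * G (x' - y) ≤ u x - c * G (x - y)) :
    c • gradient G (x - y) ∈ superDiff u x := by
  refine ⟨fun x' => c * G (x' - y), contDiff_const.mul (hG.comp (contDiff_id.sub contDiff_const)),
    fun x' m => ?_, hmax, ?_⟩
  · dsimp only
    rw [add_sub_right_comm, hGp]
  · rw [gradient_const_mul_comp_sub_const ((hG.differentiable one_ne_zero) _)]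

theorem smul_gradient_mem_subDiff (hG : ContDiff ℝ 1 G) (hGp : IsZPeriodic G) {v : Euc N → ℝ}
    {x y : Euc N} {c : ℝ} (hmin : ∀ y', v y + c * G (x - y) ≤ v y' + c * G (x - y')) :
    c • gradient G (x - y) ∈ subDiff v y := by
  refine ⟨fun y' => -(c * G (x - y')),
    (contDiff_const.mul (hG.comp (contDiff_const.sub contDiff_id))).neg, fun y' m => ?_,
    fun y' => by simpa [sub_neg_eq_add] using hmin y', ?_⟩
  · dsimp only
    rw [← sub_sub, hGp.sub_intVec]
  · rw [gradient_neg_const_mul_comp_const_sub ((hG.differentiable one_ne_zero) _)]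

end TestFunctions

theorem norm_le_of_mem_superDiff {N : ℕ} {u : Euc N → ℝ} {L : NNReal} (hu : LipschitzWith L u)
    {x q : Euc N} (hq : q ∈ superDiff u x) : ‖q‖ ≤ L := by
  obtain ⟨φ, hφ, -, hmax, rfl⟩ := hq
  refine norm_le_of_hasGradientAt_of_sub_le L.coe_nonneg
    ((hφ.differentiable one_ne_zero) x).hasGradientAt fun y => ?_
  have hLip := hu.le_add_mul x y
  rw [dist_eq_norm'] at hLip
  linarith [hmax y]

theorem exists_forall_le_doubled {N : ℕ} {u v G : Euc N → ℝ} (hu : Continuous u)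
    (hup : IsZPeriodic u) (hv : Continuous v) (hvp : IsZPeriodic v) (hG : Continuous G)
    (hGp : IsZPeriodic G) (c : ℝ) :
    ∃ x y, y ∈ centeredUnitCube N ∧ x - y ∈ centeredUnitCube N ∧
      ∀ x' y', u x' - v y' - c * G (x' - y') ≤ u x - v y - c * G (x - y) := by
  set F : Euc N → Euc N → ℝ := fun x y => u x - v y - c * G (x - y) with hF
  have hFx : ∀ x y m, F (x + intVec m) y = F x y := by
    intro x y m
    simp only [hF]
    rw [hup, add_sub_right_comm, hGp]
  have hFy : ∀ x y m, F x (y + intVec m) = F x y := by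
    intro x y m
    simp only [hF]
    rw [hvp, ← sub_sub, hGp.sub_intVec]
  have hcube := isCompact_centeredUnitCube N
  obtain ⟨⟨x₀, y₀⟩, ⟨-, hy₀⟩, hmax⟩ := (hcube.prod hcube).exists_forall_le_of_forall_exists_mem
    ⟨(0, 0), by simp [centeredUnitCube]⟩
    (f := fun p => F p.1 p.2) (by fun_prop) fun p => by
      obtain ⟨m, hm⟩ := exists_add_intVec_mem_centeredUnitCube p.1
      obtain ⟨n, hn⟩ := exists_add_intVec_mem_centeredUnitCube p.2
      exact ⟨(p.1 + intVec m, p.2 + intVec n), ⟨hm, hn⟩, by simp only [hFx, hFy, le_refl]⟩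
  obtain ⟨m, hm⟩ := exists_add_intVec_mem_centeredUnitCube (x₀ - y₀)
  refine ⟨x₀ + intVec m, y₀, hy₀, by rwa [add_sub_right_comm], fun x' y' => ?_⟩
  change F x' y' ≤ F (x₀ + intVec m) y₀
  rw [hFx]
  exact hmax (x', y')

theorem norm_le_of_mul_torusPenalty_le {N : ℕ} {z : Euc N} (hz : z ∈ centeredUnitCube N) {c : ℝ}
    (hc : 0 < c) {L : NNReal} (h : c * torusPenalty z ≤ L * ‖z‖) : ‖z‖ ≤ L / (8 * c) := by
  have hquad := eight_mul_norm_sq_le_torusPenalty hz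
  rw [le_div_iff₀ (by positivity)]
  rcases (norm_nonneg z).eq_or_lt with hz0 | hz0
  · rw [← hz0, zero_mul]
    exact L.coe_nonneg
  · nlinarith

theorem exists_smul_gradient_torusPenalty_mem_superDiff_subDiff {N : ℕ} {u v : Euc N → ℝ}
    {L : NNReal} (hu : LipschitzWith L u) (hup : IsZPeriodic u) (hv : Continuous v)
    (hvp : IsZPeriodic v) {c : ℝ} (hc : 0 < c) :
    ∃ x y, y ∈ centeredUnitCube N ∧ ‖x - y‖ ≤ L / (8 * c) ∧
      c • gradient torusPenalty (x - y) ∈ superDiff u x ∧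
      c • gradient torusPenalty (x - y) ∈ subDiff v y := by
  obtain ⟨x, y, hy, hxy, hmax⟩ := exists_forall_le_doubled hu.continuous hup hv hvp
    (contDiff_torusPenalty (n := 0)).continuous isZPeriodic_torusPenalty c
  refine ⟨x, y, hy, norm_le_of_mul_torusPenalty_le hxy hc ?_,
    smul_gradient_mem_superDiff contDiff_torusPenalty isZPeriodic_torusPenalty
      fun x' => by linarith [hmax x' y],
    smul_gradient_mem_subDiff contDiff_torusPenalty isZPeriodic_torusPenalty
      fun y' => by linarith [hmax x y']⟩
  have hdiag := hmax y y
  have hLip := hu.le_add_mul x y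
  rw [sub_self, torusPenalty_zero, mul_zero] at hdiag
  rw [dist_eq_norm] at hLip
  linarith

theorem comparison_principle_cell_problem_general {N : ℕ}
    (H : Euc N → Euc N → ℝ)
    (hHc : Continuous fun q : Euc N × Euc N => H q.1 q.2)
    (P : Euc N) (a b : ℝ) (u v : Euc N → ℝ)
    (hulip : ∃ K : NNReal, LipschitzWith K u) (huper : IsZPeriodic u)
    (husub : IsCellSubsolution H P a u)
    (hvlip : ∃ K : NNReal, LipschitzWith K v) (hvper : IsZPeriodic v)
    (hvsuper : IsCellSupersolution H P b v) :
    b ≤ a := by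
  obtain ⟨L, hu⟩ := hulip
  obtain ⟨_, hv⟩ := hvlip
  refine le_of_forall_pos_le_add fun ε hε => ?_
  obtain ⟨δ, hδ, hH⟩ := ((isCompact_centeredUnitCube N).prod
    (isCompact_closedBall (0 : Euc N) (L + ‖P‖))).exists_forall_dist_lt hHc hε
  set c : ℝ := (L + 1) / (8 * δ) with hc_def
  obtain ⟨x, y, hy, hxy, hsup, hsub⟩ :=
    exists_smul_gradient_torusPenalty_mem_superDiff_subDiff hu huper hv.continuous hvper
      (by positivity : 0 < c)
  set q := c • gradient torusPenalty (x - y)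
  have hqP : ‖q + P‖ ≤ L + ‖P‖ :=
    (norm_add_le _ _).trans (by linarith [norm_le_of_mem_superDiff hu hsup])
  have hδxy : ‖x - y‖ < δ := hxy.trans_lt <| by
    rw [hc_def, div_lt_iff₀ (by positivity)]
    field_simp
    linarith
  have hHxy := hH (y, q + P) ⟨hy, mem_closedBall_zero_iff.2 hqP⟩ (x, q + P)
    (by simpa [Prod.dist_eq, dist_eq_norm'] using hδxy)
  rw [Real.dist_eq, abs_lt] at hHxy
  linarith [husub x q hsup, hvsuper y q hsub]

/-- Comparison principle for the cell problem. -/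
theorem comparison_principle_cell_problem {N : ℕ} (hN : 1 ≤ N)
    (H : Euc N → Euc N → ℝ)
    (hHc : Continuous fun q : Euc N × Euc N => H q.1 q.2)
    (hHp : IsZPeriodicH H)
    (P : Euc N) (a b : ℝ) (u v : Euc N → ℝ)
    (hulip : ∃ K : NNReal, LipschitzWith K u) (huper : IsZPeriodic u)
    (husub : IsCellSubsolution H P a u)
    (hvlip : ∃ K : NNReal, LipschitzWith K v) (hvper : IsZPeriodic v)
    (hvsuper : IsCellSupersolution H P b v) :
    b ≤ a :=
  comparison_principle_cell_problem_general H hHc P a b u v hulip huper husub hvlip hvper hvsuper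
end
end

section
/- Estimates of the critical value: Let H : ℝ^N × ℝ^N → ℝ be continuous and ℤ^N-periodic in its first variable, let P ∈ ℝ^N, and let (u, c) be a solution of the cell problem H(x, Du + P) = a on T^N. Then for every ℤ^N-periodic φ ∈ C¹(ℝ^N) one has inf_{x ∈ ℝ^N} H(x, Dφ(x) + P) ≤ c ≤ sup_{x ∈ ℝ^N} H(x, Dφ(x) + P); consequently sup_{φ ∈ C¹ periodic} inf_x H(x, Dφ(x) + P) ≤ c ≤ inf_{φ ∈ C¹ periodic} sup_x H(x, Dφ(x) + P). Moreover H(x, p + P) ≤ c for every x ∈ ℝ^N and every p ∈ D⁺u(x), and c ≤ H(x, p + P) for every x ∈ ℝ^N and every p ∈ D⁻u(x). -/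
open Set Filter MeasureTheory

noncomputable section

/-!
Test the cell problem with a periodic `C¹` function `φ`. On the compact torus, `u - φ` attains
a maximum at some `x̂`, so `Dφ(x̂) ∈ D⁺u(x̂)` and the subsolution property gives
`inf H(·, Dφ + P) ≤ H(x̂, Dφ(x̂) + P) ≤ c`; a minimum of `u - φ` gives the upper bound through
the supersolution property. Taking the supremum, resp. infimum, over `φ` gives the min-max
bounds.
-/

def unitCube (N : ℕ) : Set (Euc N) :=
  (EuclideanSpace.equiv (Fin N) ℝ).symm '' univ.pi fun _ => Icc 0 1

lemma isCompact_unitCube (N : ℕ) : IsCompact (unitCube N) :=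
  (isCompact_univ_pi fun _ => isCompact_Icc).image (EuclideanSpace.equiv (Fin N) ℝ).symm.continuous

lemma sub_intVec_floor_mem_unitCube {N : ℕ} (y : Euc N) :
    y - intVec (fun i => ⌊y i⌋) ∈ unitCube N := by
  refine ⟨fun i => Int.fract (y i), fun i _ => ⟨Int.fract_nonneg _, (Int.fract_lt_one _).le⟩, ?_⟩
  ext i
  exact (Int.self_sub_floor (y i)).symm

namespace IsZPeriodic

variable {N : ℕ} {f g : Euc N → ℝ}

lemma sub (hf : IsZPeriodic f) (hg : IsZPeriodic g) : IsZPeriodic (f - g) := fun x z => by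
  simp only [Pi.sub_apply, hf x z, hg x z]

lemma image_unitCube (hf : IsZPeriodic f) : f '' unitCube N = range f := by
  refine (image_subset_range f _).antisymm ?_
  rintro _ ⟨y, rfl⟩
  refine ⟨_, sub_intVec_floor_mem_unitCube y, ?_⟩
  rw [← hf _ (fun i => ⌊y i⌋), sub_add_cancel]

lemma isCompact_range (hf : IsZPeriodic f) (hc : Continuous f) : IsCompact (range f) :=
  hf.image_unitCube ▸ (isCompact_unitCube N).image hc

lemma exists_forall_le (hf : IsZPeriodic f) (hc : Continuous f) : ∃ x, ∀ y, f y ≤ f x := by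
  obtain ⟨_, ⟨x, rfl⟩, hx⟩ := (hf.isCompact_range hc).exists_isGreatest (range_nonempty f)
  exact ⟨x, fun y => hx ⟨y, rfl⟩⟩

lemma exists_forall_ge (hf : IsZPeriodic f) (hc : Continuous f) : ∃ x, ∀ y, f x ≤ f y := by
  obtain ⟨_, ⟨x, rfl⟩, hx⟩ := (hf.isCompact_range hc).exists_isLeast (range_nonempty f)
  exact ⟨x, fun y => hx ⟨y, rfl⟩⟩

lemma gradient_add_intVec (hf : IsZPeriodic f) (x : Euc N) (z : Fin N → ℤ) :
    gradient f (x + intVec z) = gradient f x := by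
  have hshift : (fun y => f (y + intVec z)) = f := funext fun y => hf y z
  simp only [gradient, ← fderiv_comp_add_right, hshift]

lemma hamiltonian_gradient {H : Euc N → Euc N → ℝ} (hH : IsZPeriodicH H) (hf : IsZPeriodic f)
    (P : Euc N) : IsZPeriodic fun x => H x (gradient f x + P) := fun x z => by
  simp only [hf.gradient_add_intVec x z, hH x _ z]

end IsZPeriodic

lemma ContDiff.continuous_gradient {N : ℕ} {f : Euc N → ℝ} (hf : ContDiff ℝ 1 f) :
    Continuous (gradient f) :=
  (InnerProductSpace.toDual ℝ (Euc N)).symm.continuous.comp (hf.continuous_fderiv one_ne_zero)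

section CellProblem

variable {N : ℕ} {H : Euc N → Euc N → ℝ} {P : Euc N} {a : ℝ} {u φ : Euc N → ℝ}

lemma IsCellSubsolution.iInf_le (hsub : IsCellSubsolution H P a u) (hu : Continuous u)
    (hup : IsZPeriodic u) (hφ : ContDiff ℝ 1 φ) (hφp : IsZPeriodic φ)
    (hbdd : BddBelow (range fun x => H x (gradient φ x + P))) :
    ⨅ x, H x (gradient φ x + P) ≤ a := by
  obtain ⟨x, hx⟩ := (hup.sub hφp).exists_forall_le (hu.sub hφ.continuous)
  exact (ciInf_le hbdd x).trans (hsub x _ ⟨φ, hφ, hφp, hx, rfl⟩)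

lemma IsCellSupersolution.le_iSup (hsup : IsCellSupersolution H P a u) (hu : Continuous u)
    (hup : IsZPeriodic u) (hφ : ContDiff ℝ 1 φ) (hφp : IsZPeriodic φ)
    (hbdd : BddAbove (range fun x => H x (gradient φ x + P))) :
    a ≤ ⨆ x, H x (gradient φ x + P) := by
  obtain ⟨x, hx⟩ := (hup.sub hφp).exists_forall_ge (hu.sub hφ.continuous)
  exact (hsup x _ ⟨φ, hφ, hφp, hx, rfl⟩).trans (le_ciSup hbdd x)

lemma IsCellSolution.iInf_le_and_le_iSup (hHc : Continuous fun q : Euc N × Euc N => H q.1 q.2)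
    (hHp : IsZPeriodicH H) (hu : IsCellSolution H P u a) (hφ : ContDiff ℝ 1 φ)
    (hφp : IsZPeriodic φ) :
    ⨅ x, H x (gradient φ x + P) ≤ a ∧ a ≤ ⨆ x, H x (gradient φ x + P) := by
  obtain ⟨⟨K, hK⟩, hup, hsub, hsup⟩ := hu
  have hrange : IsCompact (range fun x => H x (gradient φ x + P)) :=
    (hφp.hamiltonian_gradient hHp P).isCompact_range
      (hHc.comp (continuous_id.prodMk (hφ.continuous_gradient.add continuous_const)))
  exact ⟨hsub.iInf_le hK.continuous hup hφ hφp hrange.bddBelow,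
    hsup.le_iSup hK.continuous hup hφ hφp hrange.bddAbove⟩

end CellProblem

theorem critical_value_estimates_general {N : ℕ}
    (H : Euc N → Euc N → ℝ)
    (hHc : Continuous fun q : Euc N × Euc N => H q.1 q.2)
    (hHp : IsZPeriodicH H)
    (P : Euc N) (u : Euc N → ℝ) (c : ℝ)
    (hu : IsCellSolution H P u c) :
    (∀ φ : Euc N → ℝ, ContDiff ℝ 1 φ → IsZPeriodic φ →
        (⨅ x : Euc N, H x (gradient φ x + P)) ≤ c ∧
        c ≤ ⨆ x : Euc N, H x (gradient φ x + P)) ∧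
    sSup { r : ℝ | ∃ φ : Euc N → ℝ, ContDiff ℝ 1 φ ∧ IsZPeriodic φ ∧
        r = ⨅ x : Euc N, H x (gradient φ x + P) } ≤ c ∧
    c ≤ sInf { r : ℝ | ∃ φ : Euc N → ℝ, ContDiff ℝ 1 φ ∧ IsZPeriodic φ ∧
        r = ⨆ x : Euc N, H x (gradient φ x + P) } ∧
    (∀ x : Euc N, ∀ q ∈ superDiff u x, H x (q + P) ≤ c) ∧
    (∀ x : Euc N, ∀ q ∈ subDiff u x, c ≤ H x (q + P)) := by
  have hest := fun φ (hφ : ContDiff ℝ 1 φ) (hφp : IsZPeriodic φ) =>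
    hu.iInf_le_and_le_iSup hHc hHp hφ hφp
  have hconst : IsZPeriodic (fun _ : Euc N => (0 : ℝ)) := fun _ _ => rfl
  refine ⟨hest, ?_, ?_, hu.2.2.1, hu.2.2.2⟩
  · refine csSup_le ⟨_, _, contDiff_const, hconst, rfl⟩ ?_
    rintro r ⟨φ, hφ, hφp, rfl⟩
    exact (hest φ hφ hφp).1
  · refine le_csInf ⟨_, _, contDiff_const, hconst, rfl⟩ ?_
    rintro r ⟨φ, hφ, hφp, rfl⟩
    exact (hest φ hφ hφp).2

/-- Estimates of the critical value. -/
theorem critical_value_estimates {N : ℕ} (hN : 1 ≤ N)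
    (H : Euc N → Euc N → ℝ)
    (hHc : Continuous fun q : Euc N × Euc N => H q.1 q.2)
    (hHp : IsZPeriodicH H)
    (P : Euc N) (u : Euc N → ℝ) (c : ℝ)
    (hu : IsCellSolution H P u c) :
    (∀ φ : Euc N → ℝ, ContDiff ℝ 1 φ → IsZPeriodic φ →
        (⨅ x : Euc N, H x (gradient φ x + P)) ≤ c ∧
        c ≤ ⨆ x : Euc N, H x (gradient φ x + P)) ∧
    sSup { r : ℝ | ∃ φ : Euc N → ℝ, ContDiff ℝ 1 φ ∧ IsZPeriodic φ ∧
        r = ⨅ x : Euc N, H x (gradient φ x + P) } ≤ c ∧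
    c ≤ sInf { r : ℝ | ∃ φ : Euc N → ℝ, ContDiff ℝ 1 φ ∧ IsZPeriodic φ ∧
        r = ⨆ x : Euc N, H x (gradient φ x + P) } ∧
    (∀ x : Euc N, ∀ q ∈ superDiff u x, H x (q + P) ≤ c) ∧
    (∀ x : Euc N, ∀ q ∈ subDiff u x, c ≤ H x (q + P)) :=
  critical_value_estimates_general H hHc hHp P u c hu
end
end

section
/- Strict monotonicity of the critical value in one dimension: Let N = 1 and assume σ̄ m₀ < σ̲. For all P, Q ∈ D with |P| > |Q| ≥ ∫₀¹ f_{σ̄ m₀}(z) dz, the corresponding critical values satisfy c(P) > c(Q), where c(P) denotes the critical value of the cell problem H(x, u' + P) = a on T. -/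
/-!
Test a solution against `Φ x = ∫₀ˣ ψ`, where `ψ + P = ± g` for a continuous periodic `g ≥ 0` of
mean `|P|`; at an extremum of `u - Φ` the equation is evaluated at `|u' + P| = g`.

* A `K`-Lipschitz subsolution with constant `c ≤ a` forces `|P| ≤ ∫₀¹ f_a`: otherwise `g` can be
  taken strictly above `f_a` (so `σ m(g) > a`) wherever `g ≤ K + |P|`, while at a maximum of
  `u - Φ` the slope `|Φ'|` is at most `K`.
* A supersolution with constant `c ≥ a > σ̄ m₀` forces `∫₀¹ f_a ≤ |Q|`: otherwise `g` can be taken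
  strictly below `f_a`, so `σ m(g) < a` everywhere.

Both `g` are built from the continuous truncations `min f_a M`. If `c(P) ≤ c(Q)`, use the level
`a = σ̄ m₀` when `c(P) ≤ σ̄ m₀`, and `a = min c(Q) σ̲` otherwise (it lies above `c(P)` since every
supersolution constant is at most `σ̲`); either way `|P| ≤ ∫₀¹ f_a ≤ |Q|`.
-/

open Set Filter MeasureTheory

noncomputable section

def IsZPeriodic1 (u : ℝ → ℝ) : Prop :=
  ∀ (x : ℝ) (z : ℤ), u (x + z) = u x

def superDiff1 (u : ℝ → ℝ) (x : ℝ) : Set ℝ :=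
  { q | ∃ φ : ℝ → ℝ, ContDiff ℝ 1 φ ∧ IsZPeriodic1 φ ∧
        (∀ y, u y - φ y ≤ u x - φ x) ∧ q = deriv φ x }

def subDiff1 (u : ℝ → ℝ) (x : ℝ) : Set ℝ :=
  { q | ∃ φ : ℝ → ℝ, ContDiff ℝ 1 φ ∧ IsZPeriodic1 φ ∧
        (∀ y, u x - φ x ≤ u y - φ y) ∧ q = deriv φ x }

def IsCellSubsolution1 (H : ℝ → ℝ → ℝ) (P : ℝ) (a : ℝ) (u : ℝ → ℝ) : Prop :=
  ∀ x, ∀ q ∈ superDiff1 u x, H x (q + P) ≤ a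

def IsCellSupersolution1 (H : ℝ → ℝ → ℝ) (P : ℝ) (a : ℝ) (u : ℝ → ℝ) : Prop :=
  ∀ x, ∀ q ∈ subDiff1 u x, a ≤ H x (q + P)

def IsCellSolution1 (H : ℝ → ℝ → ℝ) (P : ℝ) (u : ℝ → ℝ) (a : ℝ) : Prop :=
  (∃ K : NNReal, LipschitzWith K u) ∧ IsZPeriodic1 u ∧
    IsCellSubsolution1 H P a u ∧ IsCellSupersolution1 H P a u

open Function

theorem isZPeriodic1_iff_periodic {u : ℝ → ℝ} : IsZPeriodic1 u ↔ Periodic u 1 :=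
  ⟨fun h x => by simpa using h x 1, fun h x z => by simpa using h.int_mul z x⟩

theorem Function.Periodic.exists_forall_le_of_continuous {w : ℝ → ℝ} (hp : Periodic w 1)
    (hc : Continuous w) : ∃ x, ∀ y, w y ≤ w x := by
  obtain ⟨_, ⟨x, rfl⟩, hx⟩ :=
    (hp.compact_of_continuous one_ne_zero hc).exists_isGreatest (range_nonempty w)
  exact ⟨x, fun y => hx ⟨y, rfl⟩⟩

theorem Function.Periodic.exists_forall_ge_of_continuous {w : ℝ → ℝ} (hp : Periodic w 1)
    (hc : Continuous w) : ∃ x, ∀ y, w x ≤ w y := by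
  obtain ⟨x, hx⟩ := (hp.comp Neg.neg).exists_forall_le_of_continuous hc.neg
  exact ⟨x, fun y => neg_le_neg_iff.1 (hx y)⟩

theorem Continuous.contDiff_one_intervalIntegral {ψ : ℝ → ℝ} (hc : Continuous ψ) (a : ℝ) :
    ContDiff ℝ 1 (fun x => ∫ t in a..x, ψ t) := by
  rw [contDiff_one_iff_deriv, funext (hc.deriv_integral ψ a)]
  exact ⟨fun x => (hc.integral_hasStrictDerivAt a x).hasDerivAt.differentiableAt, hc⟩

theorem Function.Periodic.intervalIntegral_of_integral_eq_zero {ψ : ℝ → ℝ} {T : ℝ}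
    (hp : Periodic ψ T) (hc : Continuous ψ) (hz : ∫ t in (0:ℝ)..T, ψ t = 0) :
    Periodic (fun x => ∫ t in (0:ℝ)..x, ψ t) T := fun x => by
  simp only [hp.intervalIntegral_add_eq_add 0 x (hc.intervalIntegrable · ·), zero_add, hz,
    add_zero]

section TestFunction

variable {ψ u : ℝ → ℝ} (hc : Continuous ψ) (hp : Periodic ψ 1) (hz : ∫ t in (0:ℝ)..1, ψ t = 0)
  (hu : Continuous u) (hup : Periodic u 1)
include hc hp hz hu hup

theorem exists_mem_superDiff1 : ∃ x, ψ x ∈ superDiff1 u x := by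
  have hΦp := hp.intervalIntegral_of_integral_eq_zero hc hz
  obtain ⟨x, hx⟩ := (hup.sub hΦp).exists_forall_le_of_continuous
    (hu.sub (hc.contDiff_one_intervalIntegral 0).continuous)
  exact ⟨x, _, hc.contDiff_one_intervalIntegral 0, isZPeriodic1_iff_periodic.2 hΦp, hx,
    (hc.deriv_integral ψ 0 x).symm⟩

theorem exists_mem_subDiff1 : ∃ x, ψ x ∈ subDiff1 u x := by
  have hΦp := hp.intervalIntegral_of_integral_eq_zero hc hz
  obtain ⟨x, hx⟩ := (hup.sub hΦp).exists_forall_ge_of_continuous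
    (hu.sub (hc.contDiff_one_intervalIntegral 0).continuous)
  exact ⟨x, _, hc.contDiff_one_intervalIntegral 0, isZPeriodic1_iff_periodic.2 hΦp, hx,
    (hc.deriv_integral ψ 0 x).symm⟩

end TestFunction

theorem exists_mean_zero_abs_add_eq {g : ℝ → ℝ} (hc : Continuous g) (hp : Periodic g 1)
    (hg0 : ∀ x, 0 ≤ g x) {P : ℝ} (hgP : ∫ t in (0:ℝ)..1, g t = |P|) :
    ∃ ψ : ℝ → ℝ, Continuous ψ ∧ Periodic ψ 1 ∧ ∫ t in (0:ℝ)..1, ψ t = 0 ∧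
      ∀ x, |ψ x + P| = g x := by
  obtain ⟨s, hs, hsP⟩ : ∃ s : ℝ, |s| = 1 ∧ s * |P| = P := by
    rcases le_or_gt 0 P with h | h
    · exact ⟨1, abs_one, by rw [one_mul, abs_of_nonneg h]⟩
    · exact ⟨-1, by simp, by rw [abs_of_neg h]; ring⟩
  refine ⟨fun x => s * g x - P, (continuous_const.mul hc).sub continuous_const,
    fun x => by simp only [hp x], ?_, fun x => ?_⟩
  · rw [intervalIntegral.integral_sub ((hc.intervalIntegrable 0 1).const_mul s)
      intervalIntegrable_const, intervalIntegral.integral_const_mul, hgP, hsP]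
    simp
  · rw [sub_add_cancel, abs_mul, hs, one_mul, abs_of_nonneg (hg0 x)]

theorem LipschitzWith.abs_le_of_mem_superDiff1 {u : ℝ → ℝ} {K : NNReal} (hu : LipschitzWith K u)
    {x q : ℝ} (hq : q ∈ superDiff1 u x) : |q| ≤ K := by
  obtain ⟨φ, hφ, -, hmax, rfl⟩ := hq
  have hφx := ((hφ.differentiable one_ne_zero) x).hasDerivAt
  rw [hasDerivAt_iff_tendsto_slope_left_right] at hφx
  have hslope : ∀ y, -(K * |y - x|) ≤ φ y - φ x := fun y => by
    have h1 := hu.dist_le_mul y x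
    rw [Real.dist_eq, Real.dist_eq] at h1
    linarith [hmax y, neg_abs_le (u y - u x)]
  rw [abs_le]
  constructor
  · refine ge_of_tendsto hφx.2 ?_
    filter_upwards [self_mem_nhdsWithin] with y (hy : x < y)
    have := hslope y
    rw [abs_of_pos (sub_pos.2 hy)] at this
    rw [slope_def_field, le_div_iff₀ (sub_pos.2 hy)]
    linarith
  · refine le_of_tendsto hφx.1 ?_
    filter_upwards [self_mem_nhdsWithin] with y (hy : y < x)
    have := hslope y
    rw [abs_of_neg (sub_neg.2 hy)] at this
    rw [slope_def_field, div_le_iff_of_neg (sub_neg.2 hy)]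
    linarith

theorem StrictMonoOn.exists_continuous_inverse_projIcc {m : ℝ → ℝ} {p q : ℝ} (hpq : p ≤ q)
    (hmono : StrictMonoOn m (Icc p q)) (hmc : ContinuousOn m (Icc p q)) :
    ∃ g : ℝ → ℝ, Continuous g ∧ ∀ t, g t ∈ Icc p q ∧ m (g t) = max (m p) (min (m q) t) := by
  have hmpq : m p ≤ m q := hmono.monotoneOn (left_mem_Icc.2 hpq) (right_mem_Icc.2 hpq) hpq
  let f : Icc p q → Icc (m p) (m q) := fun r =>
    ⟨m r, hmono.monotoneOn (left_mem_Icc.2 hpq) r.2 r.2.1,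
      hmono.monotoneOn r.2 (right_mem_Icc.2 hpq) r.2.2⟩
  have hsurj : Surjective f := fun t => by
    obtain ⟨r, hr, hrt⟩ := intermediate_value_Icc hpq hmc t.2
    exact ⟨⟨r, hr⟩, Subtype.ext hrt⟩
  let e := StrictMono.orderIsoOfSurjective f (fun r s h => hmono r.2 s.2 h) hsurj
  refine ⟨fun t => e.symm (projIcc (m p) (m q) hmpq t),
    continuous_subtype_val.comp (e.symm.continuous.comp continuous_projIcc),
    fun t => ⟨(e.symm _).2, congrArg Subtype.val (e.apply_symm_apply _)⟩⟩

/-- `F` is the paper's `f_a = m⁻¹ (a / σ)`, with `m⁻¹ 1 = ∞`. -/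
def IsInvProfile (σ m : ℝ → ℝ) (a : ℝ) (F : ℝ → ENNReal) : Prop :=
  ∀ x, (σ x = a → F x = ⊤) ∧ (σ x ≠ a → ∃ r : ℝ, 0 ≤ r ∧ m r = a / σ x ∧ F x = ENNReal.ofReal r)

theorem ofReal_intervalIntegral_eq_lintegral {b : ℝ → ℝ} (hb : Continuous b) (hb0 : ∀ x, 0 ≤ b x)
    {s t : ℝ} (hst : s ≤ t) :
    ENNReal.ofReal (∫ x in s..t, b x) = ∫⁻ x in Ioc s t, ENNReal.ofReal (b x) := by
  rw [intervalIntegral.integral_of_le hst,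
    ofReal_integral_eq_lintegral_ofReal hb.integrableOn_Ioc (ae_of_all _ hb0)]

namespace IsInvProfile

variable {σ m : ℝ → ℝ} {a : ℝ} {F : ℝ → ENNReal}
  (hσc : Continuous σ) (hσp : Periodic σ 1) (hσpos : ∀ x, 0 < σ x)
  (hmc : ContinuousOn m (Ici 0)) (hmono : StrictMonoOn m (Ici 0)) (hm1 : ∀ r, 0 ≤ r → m r < 1)
include hσc hσp hσpos hmc hmono hm1

theorem exists_continuous_truncation (hF : IsInvProfile σ m a F) {M : ℝ} (hM : 0 ≤ M) :
    ∃ b : ℝ → ℝ, Continuous b ∧ Periodic b 1 ∧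
      ∀ x, 0 ≤ b x ∧ ENNReal.ofReal (b x) = min (F x) (ENNReal.ofReal M) := by
  obtain ⟨g, hg, hgm⟩ := (hmono.mono Icc_subset_Ici_self).exists_continuous_inverse_projIcc hM
    (hmc.mono Icc_subset_Ici_self)
  refine ⟨fun x => g (a / σ x), hg.comp (continuous_const.div hσc fun x => (hσpos x).ne'),
    fun x => by simp only [hσp x], fun x => ⟨(hgm _).1.1, ?_⟩⟩
  show ENNReal.ofReal (g (a / σ x)) = _
  obtain ⟨⟨hb0, -⟩, hmb⟩ := hgm (a / σ x)
  have hmM : m 0 ≤ m M := hmono.monotoneOn self_mem_Ici hM hM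
  by_cases hx : σ x = a
  · have hbM : g (a / σ x) = M := by
      refine hmono.injOn hb0 hM ?_
      rw [hmb, ← hx, div_self (hσpos x).ne', min_eq_left (hm1 M hM).le, max_eq_right hmM]
    rw [hbM, (hF x).1 hx, min_eq_right le_top]
  · obtain ⟨r, hr0, hmr, hFr⟩ := (hF x).2 hx
    rw [hFr, ← ENNReal.ofReal_min]
    congr 1
    refine hmono.injOn hb0 (le_min hr0 hM) ?_
    rw [hmb, ← hmr]
    rcases le_total r M with h | h
    · rw [min_eq_right (hmono.monotoneOn hr0 hM h), min_eq_left h,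
        max_eq_right (hmono.monotoneOn self_mem_Ici hr0 hr0)]
    · rw [min_eq_left (hmono.monotoneOn hM hr0 h), min_eq_right h, max_eq_right hmM]

theorem exists_periodic_gt (hF : IsInvProfile σ m a F) {T : ℝ}
    (hFT : ∫⁻ x in Ioc 0 1, F x < ENNReal.ofReal T) (A : ℝ) :
    ∃ g : ℝ → ℝ, Continuous g ∧ Periodic g 1 ∧ (∀ x, 0 ≤ g x) ∧ ∫ x in (0:ℝ)..1, g x = T ∧
      ∀ x, g x ≤ A → a < σ x * m (g x) := by
  obtain ⟨b, hbc, hbp, hb⟩ :=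
    hF.exists_continuous_truncation hσc hσp hσpos hmc hmono hm1 (le_max_right A 0)
  set δ := T - ∫ x in (0:ℝ)..1, b x
  have hδ : 0 < δ := by
    have : ENNReal.ofReal (∫ x in (0:ℝ)..1, b x) < ENNReal.ofReal T := by
      rw [ofReal_intervalIntegral_eq_lintegral hbc (fun x => (hb x).1) zero_le_one]
      refine lt_of_le_of_lt (lintegral_mono fun x => ?_) hFT
      rw [(hb x).2]
      exact min_le_left _ _
    linarith [(ENNReal.ofReal_lt_ofReal_iff'.1 this).1]
  refine ⟨fun x => b x + δ, hbc.add continuous_const, fun x => by simp only [hbp x],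
    fun x => by linarith [(hb x).1], ?_, fun x hx => ?_⟩
  · rw [intervalIntegral.integral_add (hbc.intervalIntegrable 0 1) intervalIntegrable_const]
    simp [δ]
  -- below the level `max A 0` the truncation is exact, so `g = f_a + δ > f_a`
  have hbM : ENNReal.ofReal (b x) < ENNReal.ofReal (max A 0) :=
    ENNReal.ofReal_lt_ofReal_iff'.2 ⟨by linarith [le_max_left A 0], by
      linarith [le_max_left A 0, (hb x).1]⟩
  have hFx : F x = ENNReal.ofReal (b x) := by
    rw [(hb x).2] at hbM ⊢
    exact (min_eq_left (min_lt_iff.1 hbM |>.resolve_right (lt_irrefl _)).le).symm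
  have hxa : σ x ≠ a := fun h => by simp [(hF x).1 h] at hFx
  obtain ⟨r, hr0, hmr, hFr⟩ := (hF x).2 hxa
  rw [hFr, ENNReal.ofReal_eq_ofReal_iff hr0 (hb x).1] at hFx
  have : m r < m (b x + δ) := hmono hr0 (show 0 ≤ b x + δ by linarith [(hb x).1]) (by linarith)
  rwa [hmr, div_lt_iff₀' (hσpos x)] at this

theorem exists_periodic_lt (hF : IsInvProfile σ m a F) (ha : ∀ x, σ x * m 0 < a) {T : ℝ}
    (hT : 0 ≤ T) (hFT : ENNReal.ofReal T < ∫⁻ x in Ioc 0 1, F x) :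
    ∃ g : ℝ → ℝ, Continuous g ∧ Periodic g 1 ∧ (∀ x, 0 ≤ g x) ∧ ∫ x in (0:ℝ)..1, g x = T ∧
      ∀ x, σ x * m (g x) < a := by
  choose b hbc hbp hb using fun n : ℕ =>
    hF.exists_continuous_truncation hσc hσp hσpos hmc hmono hm1 n.cast_nonneg
  have hb0 n x : 0 ≤ b n x := (hb n x).1
  have hbF n x : ENNReal.ofReal (b n x) = min (F x) n := by rw [(hb n x).2, ENNReal.ofReal_natCast]
  have hsup : ∫⁻ x in Ioc 0 1, F x = ⨆ n, ∫⁻ x in Ioc 0 1, ENNReal.ofReal (b n x) := by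
    rw [← lintegral_iSup (fun n => (hbc n).measurable.ennreal_ofReal)
      fun i j hij x => by simpa only [hbF] using min_le_min_left _ (Nat.cast_le.2 hij)]
    simp only [hbF, ← inf_iSup_eq, ENNReal.iSup_natCast, min_top_right]
  obtain ⟨n, hn⟩ := lt_iSup_iff.1 (hsup ▸ hFT)
  rw [← ofReal_intervalIntegral_eq_lintegral (hbc n) (hb0 n) zero_le_one] at hn
  set I := ∫ x in (0:ℝ)..1, b n x
  have hTI : T < I := (ENNReal.ofReal_lt_ofReal_iff'.1 hn).1
  have hI : 0 < I := hT.trans_lt hTI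
  have hc₀ : 0 ≤ T / I := div_nonneg hT hI.le
  have hc₁ : T / I < 1 := (div_lt_one hI).2 hTI
  refine ⟨fun x => T / I * b n x, continuous_const.mul (hbc n), fun x => by simp only [hbp n x],
    fun x => mul_nonneg hc₀ (hb0 n x), ?_, fun x => ?_⟩
  · rw [intervalIntegral.integral_const_mul, div_mul_cancel₀ _ hI.ne']
  by_cases hxa : σ x = a
  · exact hxa ▸ mul_lt_of_lt_one_right (hσpos x) (hm1 _ (mul_nonneg hc₀ (hb0 n x)))
  obtain ⟨r, hr0, hmr, hFr⟩ := (hF x).2 hxa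
  -- `g = (T / I) b ≤ (T / I) f_a < f_a`, strict since `f_a > 0` as `a > σ m 0`
  have hr : 0 < r := by
    refine (hmono.lt_iff_lt self_mem_Ici hr0).1 ?_
    rw [hmr, lt_div_iff₀' (hσpos x)]
    exact ha x
  have hbr : b n x ≤ r := by
    rw [← ENNReal.ofReal_le_ofReal_iff hr0, hbF, ← hFr]
    exact min_le_left _ _
  have : m (T / I * b n x) < m r := hmono (mul_nonneg hc₀ (hb0 n x)) hr0
    (by nlinarith [mul_le_mul_of_nonneg_left hbr hc₀])
  rwa [hmr, lt_div_iff₀' (hσpos x)] at this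

end IsInvProfile

section Viscosity

variable {σ m : ℝ → ℝ} {a c P : ℝ} {F : ℝ → ENNReal}
  (hσc : Continuous σ) (hσp : Periodic σ 1) (hσpos : ∀ x, 0 < σ x)
  (hmc : ContinuousOn m (Ici 0)) (hmono : StrictMonoOn m (Ici 0)) (hm1 : ∀ r, 0 ≤ r → m r < 1)
include hσc hσp hσpos hmc hmono hm1

theorem IsCellSubsolution1.ofReal_abs_le_lintegral {u : ℝ → ℝ} {K : NNReal}
    (hsub : IsCellSubsolution1 (fun x p => σ x * m |p|) P c u) (hu : LipschitzWith K u)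
    (hup : IsZPeriodic1 u) (hca : c ≤ a) (hF : IsInvProfile σ m a F) :
    ENNReal.ofReal |P| ≤ ∫⁻ x in Ioc 0 1, F x := by
  by_contra! hlt
  obtain ⟨g, hgc, hgp, hg0, hgP, hg⟩ :=
    hF.exists_periodic_gt hσc hσp hσpos hmc hmono hm1 hlt (K + |P|)
  obtain ⟨ψ, hψc, hψp, hψ0, hψg⟩ := exists_mean_zero_abs_add_eq hgc hgp hg0 hgP
  obtain ⟨x, hx⟩ := exists_mem_superDiff1 hψc hψp hψ0 hu.continuous
    (isZPeriodic1_iff_periodic.1 hup)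
  have hgx : g x ≤ K + |P| := by
    rw [← hψg x]
    exact (abs_add_le _ _).trans (add_le_add_left (hu.abs_le_of_mem_superDiff1 hx) _)
  have : σ x * m |ψ x + P| ≤ c := hsub x _ hx
  rw [hψg] at this
  linarith [hg x hgx]

theorem IsCellSupersolution1.lintegral_le_ofReal_abs {v : ℝ → ℝ}
    (hsup : IsCellSupersolution1 (fun x p => σ x * m |p|) P c v) (hv : Continuous v)
    (hvp : IsZPeriodic1 v) (hac : a ≤ c) (ha : ∀ x, σ x * m 0 < a) (hF : IsInvProfile σ m a F) :
    ∫⁻ x in Ioc 0 1, F x ≤ ENNReal.ofReal |P| := by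
  by_contra! hlt
  obtain ⟨g, hgc, hgp, hg0, hgP, hg⟩ :=
    hF.exists_periodic_lt hσc hσp hσpos hmc hmono hm1 ha (abs_nonneg P) hlt
  obtain ⟨ψ, hψc, hψp, hψ0, hψg⟩ := exists_mean_zero_abs_add_eq hgc hgp hg0 hgP
  obtain ⟨x, hx⟩ := exists_mem_subDiff1 hψc hψp hψ0 hv (isZPeriodic1_iff_periodic.1 hvp)
  have : c ≤ σ x * m |ψ x + P| := hsup x _ hx
  rw [hψg] at this
  linarith [hg x]

end Viscosity

open Real in
theorem abs_lt_of_cos_two_pi_mul_lt {d δ : ℝ} (hd : |d| ≤ 1 / 2) (hδ : 0 ≤ δ)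
    (h : cos (2 * π * δ) < cos (2 * π * d)) : |d| < δ := by
  by_contra! hle
  have hmem : ∀ t, 0 ≤ t → t ≤ 1 / 2 → 2 * π * t ∈ Icc 0 π := fun t h₀ h₁ =>
    ⟨by positivity, by nlinarith [pi_pos]⟩
  have := strictAntiOn_cos.antitoneOn (hmem δ hδ (hle.trans hd)) (hmem |d| (abs_nonneg d) hd)
    (mul_le_mul_of_nonneg_left hle two_pi_pos.le)
  rw [← abs_of_pos two_pi_pos, ← abs_mul, cos_abs, abs_of_pos two_pi_pos] at this
  linarith

open Real in
/-- Minimizing `v` minus a tall cosine bump centred at `y₀` gives a point close to `y₀`. -/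
theorem exists_subDiff1_nonempty_near {v : ℝ → ℝ} (hv : Continuous v) (hvp : Periodic v 1)
    (y₀ : ℝ) {δ : ℝ} (hδ : 0 < δ) : ∃ x, (subDiff1 v x).Nonempty ∧ ∃ n : ℤ, |x + n - y₀| < δ := by
  set δ' := min δ (1 / 2)
  have hδ' : 0 < δ' := lt_min hδ one_half_pos
  have hcos : cos (2 * π * δ') < 1 := by
    have := strictAntiOn_cos (left_mem_Icc.2 pi_pos.le)
      ⟨by positivity, by nlinarith [pi_pos, min_le_right δ (1 / 2)]⟩
      (by positivity : (0:ℝ) < 2 * π * δ')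
    rwa [cos_zero] at this
  obtain ⟨xm, hxm⟩ := hvp.exists_forall_ge_of_continuous hv
  set K := (v y₀ - v xm + 1) / (1 - cos (2 * π * δ'))
  have hK : K * (1 - cos (2 * π * δ')) = v y₀ - v xm + 1 :=
    div_mul_cancel₀ _ (sub_pos.2 hcos).ne'
  have hK0 : 0 < K := div_pos (by linarith [hxm y₀]) (sub_pos.2 hcos)
  set φ := fun y => K * cos (2 * π * (y - y₀))
  have hφ : ContDiff ℝ 1 φ := by fun_prop
  have hφp : Periodic φ 1 := fun y => by
    simp only [φ, show 2 * π * (y + 1 - y₀) = 2 * π * (y - y₀) + 2 * π by ring, cos_add_two_pi]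
  obtain ⟨x, hx⟩ := (hvp.sub hφp).exists_forall_ge_of_continuous (hv.sub hφ.continuous)
  refine ⟨x, ⟨_, φ, hφ, isZPeriodic1_iff_periodic.2 hφp, hx, rfl⟩, -round (x - y₀), ?_⟩
  set d := x - y₀ - round (x - y₀)
  have hcosd : cos (2 * π * d) = cos (2 * π * (x - y₀)) := by
    rw [show 2 * π * d = 2 * π * (x - y₀) - round (x - y₀) * (2 * π) by ring,
      cos_sub_int_mul_two_pi]
  have hmin : v x - φ x ≤ v y₀ - φ y₀ := hx y₀
  simp only [φ, sub_self, mul_zero, cos_zero, mul_one] at hmin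
  have hlt : cos (2 * π * δ') < cos (2 * π * d) := by
    nlinarith [hxm x]
  have := abs_lt_of_cos_two_pi_mul_lt (abs_sub_round (x - y₀)) hδ'.le hlt
  rw [Int.cast_neg, show x + -(round (x - y₀) : ℝ) - y₀ = d by ring]
  exact this.trans_le (min_le_left δ (1 / 2))

theorem IsCellSupersolution1.le_coeff {σ m v : ℝ → ℝ} {P c : ℝ}
    (hsup : IsCellSupersolution1 (fun x p => σ x * m |p|) P c v) (hσc : Continuous σ)
    (hσp : IsZPeriodic1 σ) (hσpos : ∀ x, 0 < σ x) (hm1 : ∀ r, 0 ≤ r → m r < 1)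
    (hv : Continuous v) (hvp : IsZPeriodic1 v) (y : ℝ) : c ≤ σ y := by
  by_contra! hlt
  obtain ⟨δ, hδ, hδσ⟩ := Metric.eventually_nhds_iff.1 (hσc.continuousAt.eventually_lt
    continuousAt_const hlt)
  obtain ⟨x, ⟨q, hq⟩, n, hn⟩ :=
    exists_subDiff1_nonempty_near hv (isZPeriodic1_iff_periodic.1 hvp) y hδ
  have hcx : c ≤ σ x * m |q + P| := hsup x q hq
  have hσx : σ x < c := hσp x n ▸ hδσ (by rwa [Real.dist_eq])
  nlinarith [hσpos x, hm1 |q + P| (abs_nonneg _)]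

theorem onedim_critical_value_strict_mono_general
    (σ : ℝ → ℝ) (m : ℝ → ℝ)
    (hσc : Continuous σ) (hσp : IsZPeriodic1 σ) (hσpos : ∀ x, 0 < σ x)
    (hm01 : ∀ r : ℝ, 0 ≤ r → 0 < m r ∧ m r < 1)
    (hmLip : ∃ L : NNReal, LipschitzOnWith L m (Set.Ici 0))
    (hmmono : StrictMonoOn m (Set.Ici 0))
    (σmax σmin : ℝ)
    (hσmax : IsGreatest (Set.range σ) σmax) (hσmin : IsLeast (Set.range σ) σmin)
    (hcond : σmax * m 0 < σmin)
    (f : ℝ → ℝ → ENNReal)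
    (hf : ∀ a : ℝ, σmax * m 0 ≤ a → a ≤ σmin → ∀ x : ℝ,
        (σ x = a → f a x = ⊤) ∧
        (σ x ≠ a → ∃ r : ℝ, 0 ≤ r ∧ m r = a / σ x ∧ f a x = ENNReal.ofReal r))
    (P Q : ℝ) (u v : ℝ → ℝ) (cP cQ : ℝ)
    (hsolP : IsCellSolution1 (fun x p => σ x * m |p|) P u cP)
    (hsolQ : IsCellSolution1 (fun x p => σ x * m |p|) Q v cQ)
    (hPQ : |Q| < |P|)
    (hQ : ∫⁻ z in Set.Ioc (0:ℝ) 1, f (σmax * m 0) z ≤ ENNReal.ofReal |Q|) :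
    cQ < cP := by
  obtain ⟨⟨K, hK⟩, hup, hsubP, hsupP⟩ := hsolP
  obtain ⟨⟨Kv, hKv⟩, hvp, -, hsupQ⟩ := hsolQ
  obtain ⟨L, hL⟩ := hmLip
  have hσp' := isZPeriodic1_iff_periodic.1 hσp
  have hm1 r (hr : 0 ≤ r) : m r < 1 := (hm01 r hr).2
  have hPf a (h₁ : σmax * m 0 ≤ a) (h₂ : a ≤ σmin) (hca : cP ≤ a) :
      ENNReal.ofReal |P| ≤ ∫⁻ z in Ioc 0 1, f a z :=
    hsubP.ofReal_abs_le_lintegral hσc hσp' hσpos hL.continuousOn hmmono hm1 hK hup hca (hf a h₁ h₂)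
  have hQP : ENNReal.ofReal |Q| < ENNReal.ofReal |P| :=
    ENNReal.ofReal_lt_ofReal_iff'.2 ⟨hPQ, (abs_nonneg Q).trans_lt hPQ⟩
  by_contra! hcPQ
  rcases le_or_gt cP (σmax * m 0) with hc | hc
  · exact (hPf _ le_rfl hcond.le hc).not_gt (hQ.trans_lt hQP)
  set a := min cQ σmin
  have ha : σmax * m 0 < a := lt_min (hc.trans_le hcPQ) hcond
  have hσa x : σ x * m 0 < a :=
    (mul_le_mul_of_nonneg_right (hσmax.2 ⟨x, rfl⟩) (hm01 0 le_rfl).1.le).trans_lt ha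
  have hcPσ : cP ≤ σmin := by
    obtain ⟨y, rfl⟩ := hσmin.1
    exact hsupP.le_coeff hσc hσp hσpos hm1 hK.continuous hup y
  have hfQ := hsupQ.lintegral_le_ofReal_abs hσc hσp' hσpos hL.continuousOn hmmono hm1
    hKv.continuous hvp (min_le_left _ _) hσa (hf a ha.le (min_le_right _ _))
  exact (hPf a ha.le (min_le_right _ _) (le_min hcPQ hcPσ)).not_gt (hfQ.trans_lt hQP)

/-- Strict monotonicity of the critical value in one dimension:
if `P, Q ∈ D` with `|P| > |Q| ≥ ∫₀¹ f_{σ̄ m₀}`, then `c(P) > c(Q)`. -/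
theorem onedim_critical_value_strict_mono
    (σ : ℝ → ℝ) (m : ℝ → ℝ)
    (hσc : Continuous σ) (hσp : IsZPeriodic1 σ) (hσpos : ∀ x, 0 < σ x)
    (hm01 : ∀ r : ℝ, 0 ≤ r → 0 < m r ∧ m r < 1)
    (hmLip : ∃ L : NNReal, LipschitzOnWith L m (Set.Ici 0))
    (hmmono : StrictMonoOn m (Set.Ici 0))
    (hmlim : Tendsto m atTop (nhds 1))
    (σmax σmin : ℝ)
    (hσmax : IsGreatest (Set.range σ) σmax) (hσmin : IsLeast (Set.range σ) σmin)
    (hcond : σmax * m 0 < σmin)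
    (f : ℝ → ℝ → ENNReal)
    (hf : ∀ a : ℝ, σmax * m 0 ≤ a → a ≤ σmin → ∀ x : ℝ,
        (σ x = a → f a x = ⊤) ∧
        (σ x ≠ a → ∃ r : ℝ, 0 ≤ r ∧ m r = a / σ x ∧ f a x = ENNReal.ofReal r))
    (P Q : ℝ) (u v : ℝ → ℝ) (cP cQ : ℝ)
    (hsolP : IsCellSolution1 (fun x p => σ x * m |p|) P u cP)
    (hsolQ : IsCellSolution1 (fun x p => σ x * m |p|) Q v cQ)
    (hPQ : |Q| < |P|)
    (hQ : ∫⁻ z in Set.Ioc (0:ℝ) 1, f (σmax * m 0) z ≤ ENNReal.ofReal |Q|) :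
    cQ < cP :=
  onedim_critical_value_strict_mono_general σ m hσc hσp hσpos hm01 hmLip hmmono σmax σmin hσmax
    hσmin hcond f hf P Q u v cP cQ hsolP hsolQ hPQ hQ
end
end

section
/- Non-homogenization: Assume σ̄ m₀ > σ̲. Let T > 0 and u₀ : ℝ^N → ℝ be bounded and Lipschitz continuous, and for each ε > 0 let u^ε be a bounded viscosity solution of u_t + σ(x/ε) m(|Du|) = 0 in ℝ^N × (0,T) with u^ε(·,0) = u₀. Then there is no function v : ℝ^N × [0,T) → ℝ such that u^ε converges to v locally uniformly on ℝ^N × [0,T) as ε → 0⁺ (i.e., such that for every compact set K ⊂ ℝ^N × [0,T), sup_{(x,t) ∈ K} |u^ε(x,t) − v(x,t)| → 0 as ε → 0⁺). -/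
/-
Near a point where `σ(x/ε)` is close to `σ̄`, the Hamiltonian exceeds any `a₀ < σ̄ m₀` whatever the
gradient, and comparison with a steep paraboloid barrier gives `u^ε(x₀,t) ≤ u₀(x₀) - a₀ t`; near a
point where `σ(x/ε)` is close to `σ̲` it stays below any `a₁ > σ̲`, giving
`u₀(x₁) - a₁ t ≤ u^ε(x₁,t)`. By periodicity both points can be taken within `ε√N` of the origin.
A locally uniform limit `v` is continuous, being a uniform limit of continuous functions, so letting
`ε → 0` yields `u₀(0) - a₁ t ≤ v(0,t) ≤ u₀(0) - a₀ t`, which is absurd once `a₁ < a₀`, a choice made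
possible by `σ̲ < σ̄ m₀`.
-/

open Set Filter MeasureTheory

noncomputable section

def IsLocParaMax {N : ℕ} (T : ℝ) (w φ : Euc N → ℝ → ℝ) (x₀ : Euc N) (t₀ : ℝ) : Prop :=
  ∃ δ > (0:ℝ), ∀ (y : Euc N) (s : ℝ), ‖y - x₀‖ < δ → |s - t₀| < δ → 0 < s → s < T →
    w y s - φ y s ≤ w x₀ t₀ - φ x₀ t₀

def IsLocParaMin {N : ℕ} (T : ℝ) (w φ : Euc N → ℝ → ℝ) (x₀ : Euc N) (t₀ : ℝ) : Prop :=
  ∃ δ > (0:ℝ), ∀ (y : Euc N) (s : ℝ), ‖y - x₀‖ < δ → |s - t₀| < δ → 0 < s → s < T →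
    w x₀ t₀ - φ x₀ t₀ ≤ w y s - φ y s

/-- A bounded viscosity solution of `w_t + G(x, Dw) = 0` in `ℝ^N × (0,T)`
with initial datum `u₀`. -/
def IsParabolicSolution {N : ℕ} (G : Euc N → Euc N → ℝ) (u₀ : Euc N → ℝ) (T : ℝ)
    (w : Euc N → ℝ → ℝ) : Prop :=
  (∀ x, w x 0 = u₀ x) ∧
  ContinuousOn (fun q : Euc N × ℝ => w q.1 q.2) { q : Euc N × ℝ | 0 ≤ q.2 ∧ q.2 < T } ∧
  (∃ M : ℝ, ∀ (x : Euc N) (t : ℝ), 0 ≤ t → t < T → |w x t| ≤ M) ∧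
  (∀ φ : Euc N → ℝ → ℝ, ContDiff ℝ 1 (fun q : Euc N × ℝ => φ q.1 q.2) →
    ∀ (x₀ : Euc N) (t₀ : ℝ), 0 < t₀ → t₀ < T → IsLocParaMax T w φ x₀ t₀ →
      deriv (φ x₀) t₀ + G x₀ (gradient (fun y => φ y t₀) x₀) ≤ 0) ∧
  (∀ φ : Euc N → ℝ → ℝ, ContDiff ℝ 1 (fun q : Euc N × ℝ => φ q.1 q.2) →
    ∀ (x₀ : Euc N) (t₀ : ℝ), 0 < t₀ → t₀ < T → IsLocParaMin T w φ x₀ t₀ →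
      0 ≤ deriv (φ x₀) t₀ + G x₀ (gradient (fun y => φ y t₀) x₀))


open Metric Topology

def timeStrip {N : ℕ} (T : ℝ) : Set (Euc N × ℝ) := {q | 0 ≤ q.2 ∧ q.2 < T}

lemma IsCompact.exists_isMinOn_of_le_off {α : Type*} [TopologicalSpace α] {s C : Set α}
    {f : α → ℝ} {a : α} (hC : IsCompact C) (hCs : C ⊆ s) (hf : ContinuousOn f s) (ha : a ∈ C)
    (hoff : ∀ y ∈ s \ C, f a ≤ f y) : ∃ x ∈ C, IsMinOn f s x := by
  obtain ⟨x, hxC, hx⟩ := hC.exists_isMinOn ⟨a, ha⟩ (hf.mono hCs)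
  refine ⟨x, hxC, isMinOn_iff.2 fun y hy => ?_⟩
  by_cases hyC : y ∈ C
  · exact hx hyC
  · exact (hx ha).trans (hoff y ⟨hy, hyC⟩)

lemma differentiableAt_of_contDiff_uncurry {E : Type*} [NormedAddCommGroup E] [NormedSpace ℝ E]
    {f : E → ℝ → ℝ} (hf : ContDiff ℝ 1 (fun q : E × ℝ => f q.1 q.2)) (x : E) (t : ℝ) :
    DifferentiableAt ℝ (f x) t :=
  (hf.differentiable one_ne_zero).comp (differentiable_const x |>.prodMk differentiable_id) t

lemma exists_penalty {N : ℕ} (x : Euc N) (M : ℝ) {t T γ : ℝ} (ht0 : 0 ≤ t) (ht : t < T) (hγ : 0 < γ) :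
    ∃ P : Euc N → ℝ → ℝ, ContDiff ℝ 1 (fun q : Euc N × ℝ => P q.1 q.2) ∧
      (∀ y, Monotone (P y)) ∧ (∀ y s, 0 ≤ P y s) ∧ P x t < γ ∧
      ∃ C : Set (Euc N × ℝ), IsCompact C ∧ C ⊆ timeStrip T ∧ (x, t) ∈ C ∧
        ∀ q ∈ timeStrip T \ C, M ≤ P q.1 q.2 := by
  obtain ⟨T', htT', hT'T⟩ := exists_between ht
  set c := max M 1
  have hc : 0 < c := lt_max_of_lt_right one_pos
  obtain ⟨k, hk, hkt⟩ : ∃ k : ℝ, 0 ≤ k ∧ c * Real.exp (k * (t - T')) < γ := by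
    have hlim : Tendsto (fun k : ℝ => c * Real.exp (k * (t - T'))) atTop (𝓝 (c * 0)) :=
      (Real.tendsto_exp_atBot.comp
        (tendsto_id.atTop_mul_const_of_neg (by linarith))).const_mul c
    rw [mul_zero] at hlim
    exact ((eventually_ge_atTop 0).and (hlim.eventually (gt_mem_nhds hγ))).exists
  refine ⟨fun y s => c * (‖y - x‖ ^ 2 + Real.exp (k * (s - T'))),
    contDiff_const.mul (((contDiff_norm_sq ℝ).comp (contDiff_fst.sub contDiff_const)).add
      (Real.contDiff_exp.comp (contDiff_const.mul (contDiff_snd.sub contDiff_const)))),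
    fun y s s' hss' => ?_, fun y s => by positivity, by simpa using hkt,
    closedBall x 1 ×ˢ Icc 0 T', (isCompact_closedBall x 1).prod isCompact_Icc,
    fun q hq => ⟨hq.2.1, by linarith [hq.2.2]⟩, ⟨mem_closedBall_self zero_le_one, ht0, htT'.le⟩,
    fun q ⟨hqS, hqC⟩ => ?_⟩
  · dsimp only
    gcongr
  · have hfar : 1 ≤ ‖q.1 - x‖ ^ 2 + Real.exp (k * (q.2 - T')) := by
      rcases not_and_or.1 hqC with hq | hq
      · have : 1 < ‖q.1 - x‖ := by simpa [dist_eq_norm] using hq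
        nlinarith [Real.exp_pos (k * (q.2 - T'))]
      · have : T' < q.2 := by simpa [hqS.1] using hq
        nlinarith [Real.one_le_exp (mul_nonneg hk (sub_nonneg.2 this.le)), sq_nonneg ‖q.1 - x‖]
    calc M ≤ c := le_max_left M 1
      _ ≤ c * (‖q.1 - x‖ ^ 2 + Real.exp (k * (q.2 - T'))) := le_mul_of_one_le_right hc.le hfar

section Negation

variable {N : ℕ} {T : ℝ} {w φ : Euc N → ℝ → ℝ} {x₀ : Euc N} {t₀ : ℝ}

lemma IsLocParaMax.isLocParaMin_neg (h : IsLocParaMax T (fun x t => -w x t) φ x₀ t₀) :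
    IsLocParaMin T w (fun x t => -φ x t) x₀ t₀ := by
  obtain ⟨δ, hδ, h⟩ := h
  exact ⟨δ, hδ, fun y s hy hs hs0 hsT => by linarith [h y s hy hs hs0 hsT]⟩

lemma IsLocParaMin.isLocParaMax_neg (h : IsLocParaMin T (fun x t => -w x t) φ x₀ t₀) :
    IsLocParaMax T w (fun x t => -φ x t) x₀ t₀ := by
  obtain ⟨δ, hδ, h⟩ := h
  exact ⟨δ, hδ, fun y s hy hs hs0 hsT => by linarith [h y s hy hs hs0 hsT]⟩

end Negation

namespace IsParabolicSolution

variable {N : ℕ} {G : Euc N → Euc N → ℝ} {u₀ : Euc N → ℝ} {T : ℝ} {u : Euc N → ℝ → ℝ}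

lemma neg (hsol : IsParabolicSolution G u₀ T u) :
    IsParabolicSolution (fun x p => -G x (-p)) (-u₀) T (fun x t => -u x t) := by
  obtain ⟨h0, hcont, ⟨M, hM⟩, hsub, hsup⟩ := hsol
  refine ⟨fun x => by simp [h0], hcont.neg, ⟨M, fun x t ht hT => by simpa using hM x t ht hT⟩,
    fun φ hφ x₀ t₀ ht hT hmax => ?_, fun φ hφ x₀ t₀ ht hT hmin => ?_⟩
  · have := hsup _ hφ.neg x₀ t₀ ht hT hmax.isLocParaMin_neg
    simp only [deriv.fun_neg', gradient, fderiv_fun_neg, map_neg] at this ⊢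
    linarith
  · have := hsub _ hφ.neg x₀ t₀ ht hT hmin.isLocParaMax_neg
    simp only [deriv.fun_neg', gradient, fderiv_fun_neg, map_neg] at this ⊢
    linarith

/-- If `u < ψ - γ` somewhere, a penalisation `P` makes the minimum of `u - ψ + P` over the strip
negative and attained at a positive time, where `φ - P`, with `φ` the touching subsolution, is an
admissible test function from below. -/
lemma le_of_touching (hsol : IsParabolicSolution G u₀ T u) {ψ : Euc N → ℝ → ℝ}
    (hψc : Continuous (fun q : Euc N × ℝ => ψ q.1 q.2)) (hψ0 : ∀ x, ψ x 0 ≤ u₀ x)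
    (hψb : ∃ C, ∀ x t, 0 ≤ t → t < T → ψ x t ≤ C)
    (htouch : ∀ x t, 0 < t → t < T → ∃ φ : Euc N → ℝ → ℝ,
      ContDiff ℝ 1 (fun q : Euc N × ℝ => φ q.1 q.2) ∧ (∀ y s, φ y s ≤ ψ y s) ∧ φ x t = ψ x t ∧
        ∀ p, deriv (φ x) t + G x p < 0)
    {x : Euc N} {t : ℝ} (ht0 : 0 ≤ t) (htT : t < T) : ψ x t ≤ u x t := by
  obtain ⟨h0, hcont, ⟨M, hM⟩, -, hsup⟩ := hsol
  obtain ⟨Cψ, hCψ⟩ := hψb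
  refine le_of_forall_pos_lt_add fun γ hγ => ?_
  by_contra! hcon
  obtain ⟨P, hPd, hPm, hP0, hPx, C, hC, hCS, hxC, hPfar⟩ :=
    exists_penalty x (M + Cψ) ht0 htT hγ
  set g : Euc N × ℝ → ℝ := fun q => u q.1 q.2 - ψ q.1 q.2 + P q.1 q.2
  have hgx : g (x, t) < 0 := by simp only [g]; linarith
  have hgS : ∀ q ∈ timeStrip T, P q.1 q.2 - (M + Cψ) ≤ g q := fun q hq => by
    simp only [g]; linarith [(abs_le.1 (hM q.1 q.2 hq.1 hq.2)).1, hCψ q.1 q.2 hq.1 hq.2]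
  have hgc : ContinuousOn g (timeStrip T) :=
    (hcont.sub hψc.continuousOn).add hPd.continuous.continuousOn
  obtain ⟨q, hqC, hqmin⟩ := hC.exists_isMinOn_of_le_off hCS hgc hxC fun y hy =>
    hgx.le.trans (by linarith [hgS y hy.1, hPfar y hy])
  have hqS := hCS hqC
  have hgq : g q < 0 := (isMinOn_iff.1 hqmin _ (hCS hxC)).trans_lt hgx
  have hq0 : 0 < q.2 := by
    refine lt_of_le_of_ne hqS.1 fun h => hgq.not_ge ?_
    simp only [g, ← h, h0]
    linarith [hψ0 q.1, hP0 q.1 0]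
  obtain ⟨φ, hφd, hφψ, hφq, hφG⟩ := htouch q.1 q.2 hq0 hqS.2
  have hmin : IsLocParaMin T u (fun y s => φ y s - P y s) q.1 q.2 := by
    refine ⟨1, one_pos, fun y s _ _ hs0 hsT => ?_⟩
    have := isMinOn_iff.1 hqmin (y, s) ⟨hs0.le, hsT⟩
    simp only [g] at this
    linarith [hφψ y s]
  have htest := hsup _ (hφd.sub hPd) q.1 q.2 hq0 hqS.2 hmin
  rw [deriv_fun_sub (differentiableAt_of_contDiff_uncurry hφd q.1 q.2)
    (differentiableAt_of_contDiff_uncurry hPd q.1 q.2)] at htest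
  linarith [hφG (gradient (fun y => φ y q.2 - P y q.2) q.1), (hPm q.1).deriv_nonneg (x := q.2)]

/-- The barrier is the larger of the paraboloid `u₀ x₁ - δ - a s - b ‖y - x₁‖²`, which lies
below `u₀` at time `0` once `L² ≤ 4 b δ`, and the floor `-M - c s`; `b` is also taken so large
that the paraboloid can exceed the floor only inside `ball x₁ ρ`. -/
lemma sub_mul_le (hsol : IsParabolicSolution G u₀ T u) {M : ℝ} (hu₀b : ∀ x, |u₀ x| ≤ M)
    {L : NNReal} (hu₀L : LipschitzWith L u₀) {x₁ : Euc N} {ρ a c : ℝ} (hρ : 0 < ρ)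
    (hnear : ∀ x ∈ ball x₁ ρ, ∀ p, G x p < a) (hG : ∀ x p, G x p < c)
    {t : ℝ} (ht0 : 0 ≤ t) (htT : t < T) : u₀ x₁ - a * t ≤ u x₁ t := by
  refine le_of_forall_pos_le_add fun δ hδ => ?_
  have hM : 0 ≤ M := (abs_nonneg _).trans (hu₀b x₁)
  set Q := 2 * M + |c - a| * T with hQdef
  have hQ : 0 ≤ Q := by nlinarith [abs_nonneg (c - a)]
  set b := (L : ℝ) ^ 2 / (4 * δ) + (Q + 1) / ρ ^ 2
  have hbL : (L : ℝ) ^ 2 ≤ 4 * δ * b := by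
    have : (L : ℝ) ^ 2 = 4 * δ * ((L : ℝ) ^ 2 / (4 * δ)) := by field_simp
    nlinarith [div_nonneg (add_nonneg hQ zero_le_one) (sq_nonneg ρ)]
  have hbρ : Q < b * ρ ^ 2 := by
    have : (Q + 1) / ρ ^ 2 * ρ ^ 2 = Q + 1 := by field_simp
    nlinarith [div_nonneg (sq_nonneg (L : ℝ)) (by positivity : (0 : ℝ) ≤ 4 * δ)]
  have hb : 0 < b := by positivity
  set peak : Euc N → ℝ → ℝ := fun y s => u₀ x₁ - δ - a * s - b * ‖y - x₁‖ ^ 2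
  set floor : Euc N → ℝ → ℝ := fun _ s => -M - c * s
  have hpeak : ContDiff ℝ 1 (fun q : Euc N × ℝ => peak q.1 q.2) :=
    (contDiff_const.sub (contDiff_const.mul contDiff_snd)).sub
      (contDiff_const.mul ((contDiff_norm_sq ℝ).comp (contDiff_fst.sub contDiff_const)))
  have hfloor : ContDiff ℝ 1 (fun q : Euc N × ℝ => floor q.1 q.2) :=
    contDiff_const.sub (contDiff_const.mul contDiff_snd)
  have key := hsol.le_of_touching (ψ := fun y s => max (peak y s) (floor y s)) (by fun_prop)
    (fun y => max_le ?_ ?_) ⟨M + (|a| + |c|) * T, fun y s hs hsT => max_le ?_ ?_⟩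
    (fun y s hs hsT => ?_) (x := x₁) ht0 htT
  · simp only [peak, floor, sub_self, norm_zero] at key
    linarith [le_max_left (u₀ x₁ - δ - a * t - b * 0 ^ 2) (-M - c * t)]
  · have := hu₀L.dist_le_mul x₁ y
    rw [Real.dist_eq, dist_comm, dist_eq_norm] at this
    simp only [peak]
    nlinarith [abs_le.1 this, sq_nonneg (2 * b * ‖y - x₁‖ - L)]
  · simp only [floor]; linarith [(abs_le.1 (hu₀b y)).1]
  · simp only [peak]
    nlinarith [(abs_le.1 (hu₀b x₁)).2, neg_abs_le a, abs_nonneg a, abs_nonneg c,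
      sq_nonneg ‖y - x₁‖]
  · simp only [floor]
    nlinarith [neg_abs_le c, abs_nonneg a, abs_nonneg c]
  by_cases h : floor y s ≤ peak y s
  · refine ⟨peak, hpeak, fun y s => le_max_left _ _, (max_eq_left h).symm, fun p => ?_⟩
    have hy : ‖y - x₁‖ < ρ := by
      refine lt_of_pow_lt_pow_left₀ 2 hρ.le (lt_of_mul_lt_mul_left ?_ hb.le)
      simp only [peak, floor] at h
      nlinarith [(abs_le.1 (hu₀b x₁)).2, mul_le_mul (le_abs_self (c - a)) hsT.le hs.le
        (abs_nonneg _)]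
    have hd : deriv (peak y) s = -a := by simp [peak]
    linarith [hnear y (mem_ball_iff_norm.2 hy) p]
  · refine ⟨floor, hfloor, fun y s => le_max_right _ _, (max_eq_right (le_of_not_ge h)).symm,
      fun p => ?_⟩
    have hd : deriv (floor y) s = -c := by simp [floor]
    linarith [hG y p]

lemma le_sub_mul (hsol : IsParabolicSolution G u₀ T u) {M : ℝ} (hu₀b : ∀ x, |u₀ x| ≤ M)
    {L : NNReal} (hu₀L : LipschitzWith L u₀) {x₀ : Euc N} {ρ a c : ℝ} (hρ : 0 < ρ)
    (hnear : ∀ x ∈ ball x₀ ρ, ∀ p, a < G x p) (hG : ∀ x p, c < G x p)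
    {t : ℝ} (ht0 : 0 ≤ t) (htT : t < T) : u x₀ t ≤ u₀ x₀ - a * t := by
  have := hsol.neg.sub_mul_le (a := -a) (c := -c) (fun x => by simpa using hu₀b x) hu₀L.neg hρ
    (fun x hx p => neg_lt_neg (hnear x hx (-p))) (fun x p => neg_lt_neg (hG x (-p))) ht0 htT
  simp only [Pi.neg_apply] at this
  linarith

end IsParabolicSolution

lemma intVec_neg {N : ℕ} (z : Fin N → ℤ) : intVec (-z) = -intVec z := by
  ext i
  simp [intVec]

lemma exists_intVec_norm_add_le {N : ℕ} (y : Euc N) : ∃ z, ‖y + intVec z‖ ≤ √N := by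
  refine ⟨fun i => -⌊y i⌋, ?_⟩
  rw [EuclideanSpace.norm_eq]
  refine Real.sqrt_le_sqrt ?_
  calc ∑ i, ‖(y + intVec fun i => -⌊y i⌋) i‖ ^ 2 ≤ ∑ _i : Fin N, (1 : ℝ) := by
        refine Finset.sum_le_sum fun i _ => ?_
        have : (y + intVec fun i => -⌊y i⌋) i = Int.fract (y i) := by
          simp [intVec, Int.fract, sub_eq_add_neg]
        rw [this, Real.norm_of_nonneg (Int.fract_nonneg _)]
        exact pow_le_one₀ (Int.fract_nonneg _) (Int.fract_lt_one _).le
    _ = N := by simp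

lemma IsZPeriodic.exists_norm_le_forall_ball_mem {N : ℕ} {f : Euc N → ℝ} (hf : IsZPeriodic f)
    (hfc : Continuous f) {S : Set ℝ} (hS : IsOpen S) {y : Euc N} (hy : f y ∈ S) {ε : ℝ}
    (hε : 0 < ε) : ∃ x₀ : Euc N, ‖x₀‖ ≤ ε * √N ∧ ∃ r > 0, ∀ x ∈ ball x₀ r, f (ε⁻¹ • x) ∈ S := by
  obtain ⟨ρ, hρ, hball⟩ := Metric.isOpen_iff.1 (hS.preimage hfc) y hy
  obtain ⟨z, hz⟩ := exists_intVec_norm_add_le y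
  refine ⟨ε • (y + intVec z), ?_, ε * ρ, mul_pos hε hρ, fun x hx => ?_⟩
  · rw [norm_smul, Real.norm_of_nonneg hε.le]
    gcongr
  · rw [← hf (ε⁻¹ • x) (-z)]
    apply hball
    rw [mem_ball_iff_norm] at hx ⊢
    have : ε⁻¹ • x + intVec (-z) - y = ε⁻¹ • (x - ε • (y + intVec z)) := by
      rw [intVec_neg, smul_sub, smul_smul, inv_mul_cancel₀ hε.ne', one_smul]
      abel
    rw [this, norm_smul, Real.norm_of_nonneg (inv_nonneg.2 hε.le)]
    calc ε⁻¹ * ‖x - ε • (y + intVec z)‖ < ε⁻¹ * (ε * ρ) := by gcongr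
      _ = ρ := by field_simp

section Oscillating

variable {N : ℕ} {σ : Euc N → ℝ} {m : ℝ → ℝ} {u₀ : Euc N → ℝ} {T ε : ℝ} {u : Euc N → ℝ → ℝ}
  {M : ℝ} {L : NNReal}

lemma exists_norm_le_forall_le_sub_mul (hσc : Continuous σ) (hσp : IsZPeriodic σ)
    (hσpos : ∀ x, 0 < σ x) (hm0 : ∀ r, 0 ≤ r → 0 < m r) (hmmono : MonotoneOn m (Ici 0))
    {a : ℝ} {y : Euc N} (ha : a < σ y * m 0) (hε : 0 < ε)
    (hsol : IsParabolicSolution (fun x p => σ (ε⁻¹ • x) * m ‖p‖) u₀ T u)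
    (hu₀b : ∀ x, |u₀ x| ≤ M) (hu₀L : LipschitzWith L u₀) :
    ∃ x₀ : Euc N, ‖x₀‖ ≤ ε * √N ∧ ∀ t, 0 ≤ t → t < T → u x₀ t ≤ u₀ x₀ - a * t := by
  obtain ⟨x₀, hx₀, r, hr, hball⟩ := hσp.exists_norm_le_forall_ball_mem hσc
    (isOpen_lt continuous_const (continuous_id.mul continuous_const)) ha hε
  refine ⟨x₀, hx₀, fun t ht0 htT => hsol.le_sub_mul hu₀b hu₀L hr (fun x hx p => ?_)
    (fun x p => mul_pos (hσpos _) (hm0 _ (norm_nonneg p))) (c := 0) ht0 htT⟩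
  exact (hball x hx).trans_le (mul_le_mul_of_nonneg_left
    (hmmono (mem_Ici.2 le_rfl) (norm_nonneg p) (norm_nonneg p)) (hσpos _).le)

lemma exists_norm_le_forall_sub_mul_le (hσc : Continuous σ) (hσp : IsZPeriodic σ)
    (hσpos : ∀ x, 0 < σ x) {C : ℝ} (hσC : ∀ x, σ x ≤ C) (hm1 : ∀ r, 0 ≤ r → m r < 1)
    {a : ℝ} {y : Euc N} (ha : σ y < a) (hε : 0 < ε)
    (hsol : IsParabolicSolution (fun x p => σ (ε⁻¹ • x) * m ‖p‖) u₀ T u)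
    (hu₀b : ∀ x, |u₀ x| ≤ M) (hu₀L : LipschitzWith L u₀) :
    ∃ x₁ : Euc N, ‖x₁‖ ≤ ε * √N ∧ ∀ t, 0 ≤ t → t < T → u₀ x₁ - a * t ≤ u x₁ t := by
  obtain ⟨x₁, hx₁, r, hr, hball⟩ := hσp.exists_norm_le_forall_ball_mem hσc isOpen_Iio ha hε
  have hlt : ∀ x p : Euc N, σ (ε⁻¹ • x) * m ‖p‖ < σ (ε⁻¹ • x) := fun x p =>
    mul_lt_of_lt_one_right (hσpos _) (hm1 _ (norm_nonneg p))
  exact ⟨x₁, hx₁, fun t ht0 htT => hsol.sub_mul_le hu₀b hu₀L hr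
    (fun x hx p => (hlt x p).trans (hball x hx)) (fun x p => (hlt x p).trans_le (hσC _))
    ht0 htT⟩

end Oscillating

lemma tendstoUniformlyOn_nhdsGT_zero {α : Type*} {F : ℝ → α → ℝ} {f : α → ℝ} {K : Set α}
    (h : ∀ δ > (0 : ℝ), ∃ ε₀ > (0 : ℝ), ∀ ε : ℝ, 0 < ε → ε < ε₀ → ∀ q ∈ K, |F ε q - f q| ≤ δ) :
    TendstoUniformlyOn F f (𝓝[>] 0) K := by
  refine Metric.tendstoUniformlyOn_iff.2 fun δ hδ => ?_
  obtain ⟨ε₀, hε₀, hε⟩ := h (δ / 2) (half_pos hδ)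
  filter_upwards [Ioo_mem_nhdsGT hε₀] with ε hε' q hq
  rw [dist_comm, Real.dist_eq]
  linarith [hε ε hε'.1 hε'.2 q hq]

lemma tendsto_nhdsGT_zero_of_norm_le {E : Type*} [SeminormedAddCommGroup E] {x : ℝ → E} {C : ℝ}
    (hx : ∀ ε > 0, ‖x ε‖ ≤ ε * C) : Tendsto x (𝓝[>] 0) (𝓝 0) := by
  refine squeeze_zero_norm' (eventually_nhdsWithin_of_forall hx) ?_
  have : Tendsto (fun ε : ℝ => ε * C) (𝓝 0) (𝓝 (0 * C)) := tendsto_id.mul_const C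
  rw [zero_mul] at this
  exact tendsto_nhdsWithin_of_tendsto_nhds this

lemma TendstoUniformlyOn.tendsto_comp_of_norm_le {E : Type*} [SeminormedAddCommGroup E]
    {F : ℝ → E → ℝ → ℝ} {f : E → ℝ → ℝ} {t C : ℝ}
    (hunif : TendstoUniformlyOn (fun ε q => F ε q.1 q.2) (fun q => f q.1 q.2) (𝓝[>] 0)
      (closedBall 0 1 ×ˢ {t}))
    (hcont : ∀ ε > 0, ContinuousOn (fun q : E × ℝ => F ε q.1 q.2) (closedBall 0 1 ×ˢ {t}))
    {x : ℝ → E} (hx : ∀ ε > 0, ‖x ε‖ ≤ ε * C) :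
    Tendsto (fun ε => F ε (x ε) t) (𝓝[>] 0) (𝓝 (f 0 t)) := by
  have hcont' : ∀ᶠ ε in 𝓝[>] 0, ContinuousOn (fun q : E × ℝ => F ε q.1 q.2)
      (closedBall 0 1 ×ˢ {t}) := eventually_nhdsWithin_of_forall hcont
  have hfc := hunif.continuousOn hcont'.frequently
  have hx0 := tendsto_nhdsGT_zero_of_norm_le hx
  refine hunif.tendsto_comp (hfc _ ⟨mem_closedBall_self zero_le_one, mem_singleton t⟩)
    (tendsto_nhdsWithin_iff.2 ⟨hx0.prodMk_nhds tendsto_const_nhds, ?_⟩)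
  exact (hx0.eventually (closedBall_mem_nhds 0 one_pos)).mono fun ε h => ⟨h, mem_singleton t⟩

theorem non_homogenization_general {N : ℕ}
    (σ : Euc N → ℝ) (m : ℝ → ℝ)
    (hσc : Continuous σ) (hσp : IsZPeriodic σ) (hσpos : ∀ x, 0 < σ x)
    (hm01 : ∀ r : ℝ, 0 ≤ r → 0 < m r ∧ m r < 1)
    (hmmono : StrictMonoOn m (Set.Ici 0))
    (σmax σmin : ℝ)
    (hσmax : IsGreatest (Set.range σ) σmax) (hσmin : IsLeast (Set.range σ) σmin)
    (hcond : σmin < σmax * m 0)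
    (T : ℝ) (hT : 0 < T)
    (u₀ : Euc N → ℝ) (hu₀b : ∃ M : ℝ, ∀ x, |u₀ x| ≤ M)
    (hu₀lip : ∃ K : NNReal, LipschitzWith K u₀)
    (uε : ℝ → Euc N → ℝ → ℝ)
    (huε : ∀ ε : ℝ, 0 < ε →
        IsParabolicSolution (fun x p => σ (ε⁻¹ • x) * m ‖p‖) u₀ T (uε ε)) :
    ¬ ∃ v : Euc N → ℝ → ℝ,
        ∀ K : Set (Euc N × ℝ), IsCompact K → (∀ q ∈ K, 0 ≤ q.2 ∧ q.2 < T) →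
          ∀ δ > (0:ℝ), ∃ ε₀ > (0:ℝ), ∀ ε : ℝ, 0 < ε → ε < ε₀ →
            ∀ q ∈ K, |uε ε q.1 q.2 - v q.1 q.2| ≤ δ := by
  rintro ⟨v, hv⟩
  obtain ⟨M, hM⟩ := hu₀b
  obtain ⟨L, hL⟩ := hu₀lip
  obtain ⟨⟨xmax, rfl⟩, hσle⟩ := hσmax
  obtain ⟨⟨xmin, rfl⟩, -⟩ := hσmin
  obtain ⟨a₁, hmin, ha₁⟩ := exists_between hcond
  obtain ⟨a₀, ha₁₀, hmax⟩ := exists_between ha₁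
  obtain ⟨t, ht0, htT⟩ := exists_between hT
  set K : Set (Euc N × ℝ) := closedBall 0 1 ×ˢ {t}
  have hKS : ∀ q ∈ K, 0 ≤ q.2 ∧ q.2 < T := fun q hq =>
    (mem_singleton_iff.1 hq.2).symm ▸ ⟨ht0.le, htT⟩
  have hunif := tendstoUniformlyOn_nhdsGT_zero (hv K ((isCompact_closedBall 0 1).prod
    isCompact_singleton) hKS)
  have hlim : ∀ x : ℝ → Euc N, (∀ ε > 0, ‖x ε‖ ≤ ε * √N) →
      Tendsto (fun ε => uε ε (x ε) t - u₀ (x ε)) (𝓝[>] 0) (𝓝 (v 0 t - u₀ 0)) := fun x hx =>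
    (hunif.tendsto_comp_of_norm_le (fun ε hε => (huε ε hε).2.1.mono hKS) hx).sub
      ((hL.continuous.tendsto 0).comp (tendsto_nhdsGT_zero_of_norm_le hx))
  choose! x₀ hx₀ using fun ε (hε : 0 < ε) => exists_norm_le_forall_le_sub_mul hσc hσp hσpos
    (fun r hr => (hm01 r hr).1) hmmono.monotoneOn hmax hε (huε ε hε) hM hL
  choose! x₁ hx₁ using fun ε (hε : 0 < ε) => exists_norm_le_forall_sub_mul_le hσc hσp hσpos
    (fun x => hσle ⟨x, rfl⟩) (fun r hr => (hm01 r hr).2) hmin hε (huε ε hε) hM hL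
  have hup : v 0 t - u₀ 0 ≤ -(a₀ * t) := le_of_tendsto (hlim x₀ fun ε hε => (hx₀ ε hε).1)
    (eventually_nhdsWithin_of_forall fun ε hε => by linarith [(hx₀ ε hε).2 t ht0.le htT])
  have hlow : -(a₁ * t) ≤ v 0 t - u₀ 0 := ge_of_tendsto (hlim x₁ fun ε hε => (hx₁ ε hε).1)
    (eventually_nhdsWithin_of_forall fun ε hε => by linarith [(hx₁ ε hε).2 t ht0.le htT])
  linarith [mul_lt_mul_of_pos_right ha₁₀ ht0]

/-- Non-homogenization: if `σ̄ m₀ > σ̲` then the solutions `u^ε`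
do not converge locally uniformly on `ℝ^N × [0,T)` to any function as `ε → 0⁺`. -/
theorem non_homogenization {N : ℕ} (hN : 1 ≤ N)
    (σ : Euc N → ℝ) (m : ℝ → ℝ)
    (hσc : Continuous σ) (hσp : IsZPeriodic σ) (hσpos : ∀ x, 0 < σ x)
    (hm01 : ∀ r : ℝ, 0 ≤ r → 0 < m r ∧ m r < 1)
    (hmLip : ∃ L : NNReal, LipschitzOnWith L m (Set.Ici 0))
    (hmmono : StrictMonoOn m (Set.Ici 0))
    (hmlim : Tendsto m atTop (nhds 1))
    (σmax σmin : ℝ)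
    (hσmax : IsGreatest (Set.range σ) σmax) (hσmin : IsLeast (Set.range σ) σmin)
    (hcond : σmin < σmax * m 0)
    (T : ℝ) (hT : 0 < T)
    (u₀ : Euc N → ℝ) (hu₀b : ∃ M : ℝ, ∀ x, |u₀ x| ≤ M)
    (hu₀lip : ∃ K : NNReal, LipschitzWith K u₀)
    (uε : ℝ → Euc N → ℝ → ℝ)
    (huε : ∀ ε : ℝ, 0 < ε →
        IsParabolicSolution (fun x p => σ (ε⁻¹ • x) * m ‖p‖) u₀ T (uε ε)) :
    ¬ ∃ v : Euc N → ℝ → ℝ,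
        ∀ K : Set (Euc N × ℝ), IsCompact K → (∀ q ∈ K, 0 ≤ q.2 ∧ q.2 < T) →
          ∀ δ > (0:ℝ), ∃ ε₀ > (0:ℝ), ∀ ε : ℝ, 0 < ε → ε < ε₀ →
            ∀ q ∈ K, |uε ε q.1 q.2 - v q.1 q.2| ≤ δ :=
  non_homogenization_general σ m hσc hσp hσpos hm01 hmmono σmax σmin hσmax hσmin hcond T hT u₀ hu₀b
    hu₀lip uε huε
end
end
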